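/- Let V be a nonzero finite-dimensional ℤ-graded complex vector space with zero differential and B = End(V). Then the following hold: (a) tr_{2i−2} ∘ S_* = tr_{2i} as linear functionals on HC_{−2i}(B), where S_* : HC_{−2i}(B) → HC_{−2i+2}(B) is induced by the periodicity map S; and (b) tr_0 ∘ 𝓘_* = str as linear functionals on HH_0(B), where 𝓘_* : HH_0(B) → HC_0(B) is induced by the inclusion 𝓘 of the Hochschild complex as the 0-th column of Tsygan's double complex, and str : HH_0(B) → ℂ is the supertrace isomorphism. -/

import Mathlib

open scoped TensorProduct DirectSum
open PiTensorProduct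

noncomputable section

namespace FLS

/-! ### Tensor powers and the total Hochschild/bar chain space -/

/-- The `k`-th tensor power of `A` over `ℂ`. -/
abbrev TPow (A : Type) [AddCommGroup A] [Module ℂ A] (k : ℕ) : Type :=
  PiTensorProduct ℂ (fun _ : Fin k => A)

/-- The underlying graded vector space `⊕_{k ≥ 1} A^{⊗ k}` of the Hochschild (equivalently bar)
chain complex of `A`.  (A spurious summand `A^{⊗0} ≅ ℂ` is present at index `0`; it is never
touched by any of the span submodules or formulas below, which only involve lengths `≥ 1`.) -/
abbrev Chains (A : Type) [AddCommGroup A] [Module ℂ A] : Type :=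
  ⨁ k : ℕ, TPow A k

/-- Inclusion of the length-`k` tensors in the chain space. -/
def inc (A : Type) [AddCommGroup A] [Module ℂ A] (k : ℕ) :
    TPow A k →ₗ[ℂ] Chains A :=
  DirectSum.lof ℂ ℕ (fun k => TPow A k) k

/-! ### Index and sign bookkeeping -/

/-- partial sum `d 0 + ⋯ + d (t-1)` of a tuple of degrees. -/
def psum {m : ℕ} (d : Fin m → ℤ) (t : ℕ) : ℤ :=
  ∑ i : Fin m, if (i : ℕ) < t then d i else 0

/-- `a_0 ⊗ ⋯ ⊗ a_i a_{i+1} ⊗ ⋯ ⊗ a_{k+1}` : multiply the `i`-th and `(i+1)`-st entries. -/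
def mulAt {A : Type} [Mul A] {k : ℕ} (a : Fin (k + 2) → A) (i : Fin (k + 1)) :
    Fin (k + 1) → A :=
  fun j =>
    if (j : ℕ) < (i : ℕ) then a (Fin.castSucc j)
    else if (j : ℕ) = (i : ℕ) then a (Fin.castSucc j) * a (Fin.succ j)
    else a (Fin.succ j)

/-- `a_{k+1} a_0 ⊗ a_1 ⊗ ⋯ ⊗ a_k` : the cyclic multiplication term. -/
def cycMul {A : Type} [Mul A] {k : ℕ} (a : Fin (k + 2) → A) : Fin (k + 1) → A :=
  fun j =>
    if (j : ℕ) = 0 then a (Fin.last (k + 1)) * a (Fin.castSucc j)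
    else a (Fin.castSucc j)

/-- Cyclic rotation `(a_0, …, a_n) ↦ (a_n, a_0, …, a_{n-1})`. -/
def rot {α : Type} {n : ℕ} (f : Fin (n + 1) → α) : Fin (n + 1) → α :=
  fun t => f (t - 1)

/-- Iterated cyclic rotation. -/
def rotIter {α : Type} {n : ℕ} : ℕ → (Fin (n + 1) → α) → (Fin (n + 1) → α)
  | 0, f => f
  | (t + 1), f => rot (rotIter t f)

/-- The sign `(-1)^{(d_n+1)(d_0+⋯+d_{n-1}+n)}` of the signed cyclic operator `τ` on a tensor
whose entries are homogeneous of degrees `d_0, …, d_n` (length `n+1`). -/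
def tauSign {n : ℕ} (d : Fin (n + 1) → ℤ) : ℂ :=
  (-1 : ℂ) ^ ((d (Fin.last n) + 1) * (psum d n + (n : ℤ)))

/-- The sign of `τ^j` on a tensor with homogeneous entries of degrees `d`. -/
def tauSignPow (j : ℕ) {n : ℕ} (d : Fin (n + 1) → ℤ) : ℂ :=
  ∏ t ∈ Finset.range j, tauSign (rotIter t d)

/-! ### Hochschild chains of a given cohomological degree -/

/-- The subspace of `Chains A` spanned by simple tensors of length `k+1` (some `k ≥ 0`) with
homogeneous entries whose degrees sum to `n + k`, i.e. the homogeneous chains of cohomological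
degree `n` in the Hochschild (or bar) complex `⊕_{k ≥ 1} (A[1])^{⊗k}[-1]`. -/
def chainsDeg (A : Type) [AddCommGroup A] [Module ℂ A] (𝒜 : ℤ → Submodule ℂ A) (n : ℤ) :
    Submodule ℂ (Chains A) :=
  Submodule.span ℂ
    {x | ∃ (k : ℕ) (d : Fin (k + 1) → ℤ) (a : Fin (k + 1) → A),
      (∀ i, a i ∈ 𝒜 (d i)) ∧ (∑ i, d i) = n + k ∧
      x = inc A (k + 1) (tprod ℂ a)}

/-- The subspace of `Chains A` spanned by simple tensors of length exactly `k` with homogeneous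
entries whose degrees sum to `n`. -/
def pureChains (A : Type) [AddCommGroup A] [Module ℂ A] (𝒜 : ℤ → Submodule ℂ A)
    (k : ℕ) (n : ℤ) : Submodule ℂ (Chains A) :=
  Submodule.span ℂ
    {x | ∃ (d : Fin k → ℤ) (a : Fin k → A),
      (∀ i, a i ∈ 𝒜 (d i)) ∧ (∑ i, d i) = n ∧ x = inc A k (tprod ℂ a)}

/-! ### The Hochschild and bar differentials, characterized by their defining formulas -/

/-- `D` is the Hochschild differential of the dg-algebra `(A, 𝒜, δ)`: it is linear and is given
on simple tensors with homogeneous entries by the standard formula (on length-1 tensors only the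
internal differential `δ` contributes). -/
def IsHochschildDifferential (A : Type) [Ring A] [Algebra ℂ A] (𝒜 : ℤ → Submodule ℂ A)
    (δ : A →ₗ[ℂ] A) (D : Chains A →ₗ[ℂ] Chains A) : Prop :=
  (∀ a : A, D (inc A 1 (tprod ℂ (fun _ => a))) = inc A 1 (tprod ℂ (fun _ => δ a))) ∧
  (∀ (k : ℕ) (d : Fin (k + 2) → ℤ) (a : Fin (k + 2) → A), (∀ i, a i ∈ 𝒜 (d i)) →
    D (inc A (k + 2) (tprod ℂ a)) =
      (∑ i : Fin (k + 1),
        ((-1 : ℂ) ^ (psum d ((i : ℕ) + 1) + ((i : ℕ) : ℤ) + 1)) •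
          inc A (k + 1) (tprod ℂ (mulAt a i)))
      + ((-1 : ℂ) ^ ((d (Fin.last (k + 1)) + 1) * (psum d (k + 1) + (k : ℤ)))) •
          inc A (k + 1) (tprod ℂ (cycMul a))
      + ∑ j : Fin (k + 2),
          ((-1 : ℂ) ^ (psum d (j : ℕ) + ((j : ℕ) : ℤ))) •
            inc A (k + 2) (tprod ℂ (Function.update a j (δ (a j)))))

/-- `D` is the bar differential of the dg-algebra `(A, 𝒜, δ)`: same formula as the Hochschild
differential, with the cyclic multiplication term omitted. -/
def IsBarDifferential (A : Type) [Ring A] [Algebra ℂ A] (𝒜 : ℤ → Submodule ℂ A)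
    (δ : A →ₗ[ℂ] A) (D : Chains A →ₗ[ℂ] Chains A) : Prop :=
  (∀ a : A, D (inc A 1 (tprod ℂ (fun _ => a))) = inc A 1 (tprod ℂ (fun _ => δ a))) ∧
  (∀ (k : ℕ) (d : Fin (k + 2) → ℤ) (a : Fin (k + 2) → A), (∀ i, a i ∈ 𝒜 (d i)) →
    D (inc A (k + 2) (tprod ℂ a)) =
      (∑ i : Fin (k + 1),
        ((-1 : ℂ) ^ (psum d ((i : ℕ) + 1) + ((i : ℕ) : ℤ) + 1)) •
          inc A (k + 1) (tprod ℂ (mulAt a i)))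
      + ∑ j : Fin (k + 2),
          ((-1 : ℂ) ^ (psum d (j : ℕ) + ((j : ℕ) : ℤ))) •
            inc A (k + 2) (tprod ℂ (Function.update a j (δ (a j)))))

/-- `T` is the signed cyclic operator `τ` (acting on each tensor power of `A`). -/
def IsCyclicOp (A : Type) [AddCommGroup A] [Module ℂ A] (𝒜 : ℤ → Submodule ℂ A)
    (T : Chains A →ₗ[ℂ] Chains A) : Prop :=
  ∀ (k : ℕ) (d : Fin (k + 1) → ℤ) (a : Fin (k + 1) → A), (∀ i, a i ∈ 𝒜 (d i)) →
    T (inc A (k + 1) (tprod ℂ a)) = tauSign d • inc A (k + 1) (tprod ℂ (rot a))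

/-- `N` is the norm operator `id + τ + ⋯ + τ^{k-1}` (on tensors of length `k`). -/
def IsNormOp (A : Type) [AddCommGroup A] [Module ℂ A] (𝒜 : ℤ → Submodule ℂ A)
    (N : Chains A →ₗ[ℂ] Chains A) : Prop :=
  ∀ (k : ℕ) (d : Fin (k + 1) → ℤ) (a : Fin (k + 1) → A), (∀ i, a i ∈ 𝒜 (d i)) →
    N (inc A (k + 1) (tprod ℂ a)) =
      ∑ j ∈ Finset.range (k + 1), tauSignPow j d • inc A (k + 1) (tprod ℂ (rotIter j a))

/-! ### Hochschild homology -/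

def cocycles (A : Type) [AddCommGroup A] [Module ℂ A] (𝒜 : ℤ → Submodule ℂ A)
    (D : Chains A →ₗ[ℂ] Chains A) (n : ℤ) : Submodule ℂ (Chains A) :=
  LinearMap.ker D ⊓ chainsDeg A 𝒜 n

def cobound (A : Type) [AddCommGroup A] [Module ℂ A] (𝒜 : ℤ → Submodule ℂ A)
    (D : Chains A →ₗ[ℂ] Chains A) (n : ℤ) : Submodule ℂ (Chains A) :=
  Submodule.map D (chainsDeg A 𝒜 (n - 1))

/-- The image of the degree-`n` cocycles in `Chains A ⧸ (boundaries)`; this realizes the `n`-th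
cohomology of the Hochschild chain complex (i.e. the Hochschild homology `HH_{-n}`) as a
subspace of the quotient of the chain space by the boundaries. -/
def HHsub (A : Type) [AddCommGroup A] [Module ℂ A] (𝒜 : ℤ → Submodule ℂ A)
    (D : Chains A →ₗ[ℂ] Chains A) (n : ℤ) :
    Submodule ℂ (Chains A ⧸ cobound A 𝒜 D n) :=
  Submodule.map (cobound A 𝒜 D n).mkQ (cocycles A 𝒜 D n)

/-- `HH A 𝒜 D n` : the `n`-th cohomology of the Hochschild chain complex, i.e. the Hochschild
homology `HH_{-n}`. -/
abbrev HH (A : Type) [AddCommGroup A] [Module ℂ A] (𝒜 : ℤ → Submodule ℂ A)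
    (D : Chains A →ₗ[ℂ] Chains A) (n : ℤ) : Type :=
  ↥(HHsub A 𝒜 D n)

/-- The class in `HH A 𝒜 D n` of a cocycle. -/
def hhClass (A : Type) [AddCommGroup A] [Module ℂ A] (𝒜 : ℤ → Submodule ℂ A)
    (D : Chains A →ₗ[ℂ] Chains A) (n : ℤ) (x : Chains A)
    (hx : x ∈ cocycles A 𝒜 D n) : HH A 𝒜 D n :=
  ⟨(cobound A 𝒜 D n).mkQ x, Submodule.mem_map_of_mem hx⟩

/-! ### The graded endomorphism algebra of a graded vector space, and the supertrace -/

/-- The degree-`m` part of `End(V)` for a graded vector space `(M, 𝒱)`. -/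
def endGrade (M : Type) [AddCommGroup M] [Module ℂ M] (𝒱 : ℤ → Submodule ℂ M) (m : ℤ) :
    Submodule ℂ (Module.End ℂ M) where
  carrier := {f | ∀ (i : ℤ), ∀ v ∈ 𝒱 i, f v ∈ 𝒱 (i + m)}
  add_mem' := by
    intro f g hf hg i v hv
    have h := (𝒱 (i + m)).add_mem (hf i v hv) (hg i v hv)
    simpa [LinearMap.add_apply] using h
  zero_mem' := by
    intro i v hv
    simp
  smul_mem' := by
    intro c f hf i v hv
    have h := (𝒱 (i + m)).smul_mem c (hf i v hv)
    simpa [LinearMap.smul_apply] using h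

/-- The projection `M → M` onto the `i`-th graded piece `𝒱 i`. -/
def gprojection (M : Type) [AddCommGroup M] [Module ℂ M] (𝒱 : ℤ → Submodule ℂ M)
    [DirectSum.Decomposition 𝒱] (i : ℤ) : M →ₗ[ℂ] M :=
  (𝒱 i).subtype ∘ₗ (DirectSum.component ℂ ℤ (fun j => ↥(𝒱 j)) i) ∘ₗ
    (DirectSum.decomposeLinearEquiv 𝒱).toLinearMap

/-- The supertrace `str(f) = ∑_i (-1)^i tr(π_i ∘ f ∘ π_i)` of an endomorphism of a graded
vector space. -/
def str (M : Type) [AddCommGroup M] [Module ℂ M] (𝒱 : ℤ → Submodule ℂ M)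
    [DirectSum.Decomposition 𝒱] (f : Module.End ℂ M) : ℂ :=
  ∑ᶠ i : ℤ, ((-1 : ℂ) ^ i) *
    LinearMap.trace ℂ M (gprojection M 𝒱 i ∘ₗ f ∘ₗ gprojection M 𝒱 i)

/-- The supertrace Hochschild `0`-cocycle of `End(V)`, applied to a chain: the supertrace of the
length-one component. -/
def strChain (M : Type) [AddCommGroup M] [Module ℂ M] (𝒱 : ℤ → Submodule ℂ M)
    [DirectSum.Decomposition 𝒱] (x : Chains (Module.End ℂ M)) : ℂ :=
  str M 𝒱 ((PiTensorProduct.subsingletonEquiv (0 : Fin 1))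
    ((DirectSum.component ℂ ℕ (fun k => TPow (Module.End ℂ M) k) 1) x))

/-- `e : HH_0(End V) ≃ ℂ` is the supertrace isomorphism: it takes the class of the length-one
cycle given by a degree-0 endomorphism `f` to `str f`. -/
def IsStrIso (M : Type) [AddCommGroup M] [Module ℂ M] (𝒱 : ℤ → Submodule ℂ M)
    [DirectSum.Decomposition 𝒱]
    (D : Chains (Module.End ℂ M) →ₗ[ℂ] Chains (Module.End ℂ M))
    (e : HH (Module.End ℂ M) (endGrade M 𝒱) D 0 ≃ₗ[ℂ] ℂ) : Prop :=
  ∀ (f : Module.End ℂ M), f ∈ endGrade M 𝒱 0 →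
    ∀ (hz : inc (Module.End ℂ M) 1 (tprod ℂ (fun _ => f)) ∈
        cocycles (Module.End ℂ M) (endGrade M 𝒱) D 0),
      e (hhClass (Module.End ℂ M) (endGrade M 𝒱) D 0 _ hz) = str M 𝒱 f

/-! ### Tsygan's double complex, realized on its total space, and cyclic homology -/

/-- Type synonym for a single column of Tsygan's double complex (this hides the graded
ring structure of the chain space from instance resolution). -/
def CCol (A : Type) [AddCommGroup A] [Module ℂ A] : Type := Chains A

instance (A : Type) [AddCommGroup A] [Module ℂ A] : AddCommGroup (CCol A) :=
  inferInstanceAs (AddCommGroup (Chains A))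

instance (A : Type) [AddCommGroup A] [Module ℂ A] : Module ℂ (CCol A) :=
  inferInstanceAs (Module ℂ (Chains A))

/-- The total space of Tsygan's double complex: the summand of index `m : ℕ` is the column
`p = -m` (whose underlying space is the chain space, for both the Hochschild and the bar
columns). -/
abbrev CycChains (A : Type) [AddCommGroup A] [Module ℂ A] : Type :=
  ⨁ _m : ℕ, CCol A

/-- Inclusion of the column `p = -m` into the total space. -/
def cofm (A : Type) [AddCommGroup A] [Module ℂ A] (m : ℕ) :
    Chains A →ₗ[ℂ] CycChains A :=
  DirectSum.lof ℂ ℕ (fun _ => CCol A) m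

/-- The total differential of Tsygan's double complex, built from the Hochschild differential
`DH` (vertical differential on the even columns), the bar differential `Db` (vertical
differential `-Db` on the odd columns), the norm operator `N` (horizontal differential out of
the even columns) and the cyclic operator `T` (horizontal differential `id - T` out of the odd
columns); column `p = 0` has no horizontal differential. -/
def cyclicDifferential (A : Type) [AddCommGroup A] [Module ℂ A]
    (DH Db T N : Chains A →ₗ[ℂ] Chains A) : CycChains A →ₗ[ℂ] CycChains A :=
  DirectSum.toModule ℂ ℕ (CycChains A) (fun m =>
    (if Even m then cofm A m ∘ₗ DH else cofm A m ∘ₗ (-Db))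
    + (if m = 0 then 0
       else if Even m then cofm A (m - 1) ∘ₗ N
       else cofm A (m - 1) ∘ₗ ((LinearMap.id : Chains A →ₗ[ℂ] Chains A) - T)))

/-- The periodicity map `S : Cycl^• → Cycl^{•+2}`, induced by the projection of Tsygan's double
complex killing the columns `p = 0, -1`. -/
def Smap (A : Type) [AddCommGroup A] [Module ℂ A] : CycChains A →ₗ[ℂ] CycChains A :=
  DirectSum.toModule ℂ ℕ (CycChains A) (fun m =>
    if 2 ≤ m then cofm A (m - 2) else 0)

/-- The inclusion `𝓘` of the Hochschild complex as the column `p = 0` of Tsygan's double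
complex. -/
def Imap (A : Type) [AddCommGroup A] [Module ℂ A] : Chains A →ₗ[ℂ] CycChains A :=
  cofm A 0

/-- The homogeneous part of total (cohomological) degree `n` of the total space of Tsygan's
double complex: it is spanned by tensors of length `k+1` with homogeneous entries of total
degree `(n + m) + k` sitting in the column `p = -m` (so that `p + q = n` where `q = n + m` is
the cohomological chain degree). -/
def cycDeg (A : Type) [AddCommGroup A] [Module ℂ A] (𝒜 : ℤ → Submodule ℂ A) (n : ℤ) :
    Submodule ℂ (CycChains A) :=
  Submodule.span ℂ
    {x | ∃ (m k : ℕ) (d : Fin (k + 1) → ℤ) (a : Fin (k + 1) → A),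
      (∀ i, a i ∈ 𝒜 (d i)) ∧ (∑ i, d i) = (n + m) + k ∧
      x = cofm A m (inc A (k + 1) (tprod ℂ a))}

def cycCocycles (A : Type) [AddCommGroup A] [Module ℂ A] (𝒜 : ℤ → Submodule ℂ A)
    (Dc : CycChains A →ₗ[ℂ] CycChains A) (n : ℤ) : Submodule ℂ (CycChains A) :=
  LinearMap.ker Dc ⊓ cycDeg A 𝒜 n

def cycBound (A : Type) [AddCommGroup A] [Module ℂ A] (𝒜 : ℤ → Submodule ℂ A)
    (Dc : CycChains A →ₗ[ℂ] CycChains A) (n : ℤ) : Submodule ℂ (CycChains A) :=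
  Submodule.map Dc (cycDeg A 𝒜 (n - 1))

/-- The degree-`n` cohomology of the cyclic complex (i.e. the cyclic homology `HC_{-n}`),
realized as the image of the degree-`n` cocycles in the quotient by the boundaries. -/
def HCsub (A : Type) [AddCommGroup A] [Module ℂ A] (𝒜 : ℤ → Submodule ℂ A)
    (Dc : CycChains A →ₗ[ℂ] CycChains A) (n : ℤ) :
    Submodule ℂ (CycChains A ⧸ cycBound A 𝒜 Dc n) :=
  Submodule.map (cycBound A 𝒜 Dc n).mkQ (cycCocycles A 𝒜 Dc n)

/-- `HC A 𝒜 Dc n` : the cyclic homology `HC_{-n}`. -/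
abbrev HC (A : Type) [AddCommGroup A] [Module ℂ A] (𝒜 : ℤ → Submodule ℂ A)
    (Dc : CycChains A →ₗ[ℂ] CycChains A) (n : ℤ) : Type :=
  ↥(HCsub A 𝒜 Dc n)

/-- The class in `HC A 𝒜 Dc n` of a cyclic cocycle. -/
def hcClass (A : Type) [AddCommGroup A] [Module ℂ A] (𝒜 : ℤ → Submodule ℂ A)
    (Dc : CycChains A →ₗ[ℂ] CycChains A) (n : ℤ) (x : CycChains A)
    (hx : x ∈ cycCocycles A 𝒜 Dc n) : HC A 𝒜 Dc n :=
  ⟨(cycBound A 𝒜 Dc n).mkQ x, Submodule.mem_map_of_mem hx⟩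

/-- `e : HC_{-2i}(End V) ≃ ℂ` is the canonical trace isomorphism `tr_{2i}` : it takes the class
of any cyclic cycle given by a tuple `(b_{2i}, …, b_0, b_{-1}, …, b_{-2j})` (with
`b_m ∈ CC^{-2i+m,-m}`, i.e. the component placed in the column of index `col = 2i - m` is a
chain of cohomological degree `col - 2i`) to the supertrace cocycle evaluated on `b_0` (the
component in the column `p = -2i`, of chain degree `0`). -/
def IsTrIso (M : Type) [AddCommGroup M] [Module ℂ M] (𝒱 : ℤ → Submodule ℂ M)
    [DirectSum.Decomposition 𝒱]
    (Dc : CycChains (Module.End ℂ M) →ₗ[ℂ] CycChains (Module.End ℂ M)) (i : ℕ)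
    (e : HC (Module.End ℂ M) (endGrade M 𝒱) Dc (-(2 * (i : ℤ))) ≃ₗ[ℂ] ℂ) : Prop :=
  ∀ (j : ℕ) (c : ℕ → Chains (Module.End ℂ M)),
    (∀ col : ℕ, c col ∈ chainsDeg (Module.End ℂ M) (endGrade M 𝒱) ((col : ℤ) - 2 * i)) →
    ∀ (hx : (∑ col ∈ Finset.range (2 * i + 2 * j + 1), cofm (Module.End ℂ M) col (c col)) ∈
        cycCocycles (Module.End ℂ M) (endGrade M 𝒱) Dc (-(2 * (i : ℤ)))),
      e (hcClass (Module.End ℂ M) (endGrade M 𝒱) Dc (-(2 * (i : ℤ))) _ hx) =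
        strChain M 𝒱 (c (2 * i))

/-! ### A∞-morphisms : Taylor components, `F_bar`, `F_Hoch`, `F_cycl` -/

/-- The axioms of a (unital) differential graded `ℂ`-algebra for the data `(A, 𝒜, δ)`. -/
structure IsDGAlgebra (A : Type) [Ring A] [Algebra ℂ A] (𝒜 : ℤ → Submodule ℂ A)
    (δ : A →ₗ[ℂ] A) : Prop where
  mul_mem : ∀ {i j : ℤ} {a b : A}, a ∈ 𝒜 i → b ∈ 𝒜 j → a * b ∈ 𝒜 (i + j)
  one_mem : (1 : A) ∈ 𝒜 0
  delta_sq : ∀ a : A, δ (δ a) = 0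
  delta_mem : ∀ {i : ℤ} {a : A}, a ∈ 𝒜 i → δ a ∈ 𝒜 (i + 1)
  leibniz : ∀ {i : ℤ} {a : A}, a ∈ 𝒜 i → ∀ b : A,
    δ (a * b) = δ a * b + ((-1 : ℂ) ^ i) • (a * δ b)

/-- The Taylor components `F_k` of an `A∞`-morphism have degree `1 - k` : `F_k` takes a
homogeneous tensor of total degree `n` to an element of degree `n + 1 - k`. -/
def FTaylorDegree (A B : Type) [AddCommGroup A] [Module ℂ A] [AddCommGroup B] [Module ℂ B]
    (𝒜 : ℤ → Submodule ℂ A) (ℬ : ℤ → Submodule ℂ B)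
    (F : ∀ k : ℕ, TPow A k →ₗ[ℂ] B) : Prop :=
  ∀ (k : ℕ) (d : Fin (k + 1) → ℤ) (a : Fin (k + 1) → A), (∀ i, a i ∈ 𝒜 (d i)) →
    F (k + 1) (tprod ℂ a) ∈ ℬ ((∑ i, d i) + 1 - ((k : ℤ) + 1))

/-- `F_{k_1} ⊠ ⋯ ⊠ F_{k_l}` applied to a simple tensor, for the composition `c = (k_1, …, k_l)`
of `n` : apply the Taylor components to the consecutive blocks. -/
def blockTensor (A B : Type) [AddCommGroup A] [Module ℂ A] [AddCommGroup B] [Module ℂ B]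
    (F : ∀ k : ℕ, TPow A k →ₗ[ℂ] B) {n : ℕ} (c : Composition n) (a : Fin n → A) :
    TPow B c.length :=
  tprod ℂ (fun i : Fin c.length =>
    F (c.blocksFun i) (tprod ℂ (fun j : Fin (c.blocksFun i) => a (c.embedding i j))))

/-- The cyclic predecessor of an index in `Fin m`. -/
def prevIdx {m : ℕ} (i : Fin m) : Fin m :=
  ⟨((i : ℕ) + (m - 1)) % m, Nat.mod_lt _ i.pos⟩

open Fin.NatCast in
/-- `F_{k_l} ⊠ F_{k_1} ⊠ ⋯ ⊠ F_{k_{l-1}}` applied to a simple tensor: apply the cyclically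
rotated sequence of Taylor components (last block first) to the consecutive blocks. -/
def blockTensorRot (A B : Type) [AddCommGroup A] [Module ℂ A] [AddCommGroup B] [Module ℂ B]
    (F : ∀ k : ℕ, TPow A k →ₗ[ℂ] B) {n : ℕ} (c : Composition (n + 1))
    (b : Fin (n + 1) → A) : TPow B c.length :=
  tprod ℂ (fun i : Fin c.length =>
    F (c.blocksFun (prevIdx i))
      (tprod ℂ (fun j : Fin (c.blocksFun (prevIdx i)) =>
        b ((((∑ t : Fin c.length, if (t : ℕ) < (i : ℕ) then c.blocksFun (prevIdx t) else 0)
              + (j : ℕ) : ℕ) : Fin (n + 1))))))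

/-- `Fb` is the map `F_bar` induced on bar complexes by the Taylor components `F`. -/
def IsFbar (A B : Type) [AddCommGroup A] [Module ℂ A] [AddCommGroup B] [Module ℂ B]
    (F : ∀ k : ℕ, TPow A k →ₗ[ℂ] B) (Fb : Chains A →ₗ[ℂ] Chains B) : Prop :=
  ∀ (k : ℕ) (a : Fin (k + 1) → A),
    Fb (inc A (k + 1) (tprod ℂ a)) =
      ∑ c : Composition (k + 1), inc B c.length (blockTensor A B F c a)

/-- `FH` is the map `F_Hoch` induced on Hochschild complexes by the Taylor components `F`. -/
def IsFhoch (A B : Type) [AddCommGroup A] [Module ℂ A] [AddCommGroup B] [Module ℂ B]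
    (𝒜 : ℤ → Submodule ℂ A) (F : ∀ k : ℕ, TPow A k →ₗ[ℂ] B)
    (FH : Chains A →ₗ[ℂ] Chains B) : Prop :=
  ∀ (k : ℕ) (d : Fin (k + 1) → ℤ) (a : Fin (k + 1) → A), (∀ i, a i ∈ 𝒜 (d i)) →
    FH (inc A (k + 1) (tprod ℂ a)) =
      ∑ c : Composition (k + 1),
        (inc B c.length (blockTensor A B F c a)
          + ∑ j ∈ Finset.Ico 1 (c.blocks.getLastD 1),
              tauSignPow j d • inc B c.length (blockTensorRot A B F c (rotIter j a)))

/-- `F_cycl = F_tsyg` : the map on the total spaces of Tsygan's double complexes which is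
`F_Hoch` on the even columns and `F_bar` on the odd columns. -/
def Fcyclic (A B : Type) [AddCommGroup A] [Module ℂ A] [AddCommGroup B] [Module ℂ B]
    (FH Fb : Chains A →ₗ[ℂ] Chains B) : CycChains A →ₗ[ℂ] CycChains B :=
  DirectSum.toModule ℂ ℕ (CycChains B) (fun m =>
    if Even m then cofm B m ∘ₗ FH else cofm B m ∘ₗ Fb)

end FLS


namespace FLS


set_option linter.unusedSectionVars false

section Aux1

variable (A : Type) [AddCommGroup A] [Module ℂ A]

def ccomp (m : ℕ) : CycChains A →ₗ[ℂ] Chains A :=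
  DirectSum.component ℂ ℕ (fun _ => CCol A) m

lemma ccomp_cofm_same (m : ℕ) (y : Chains A) : ccomp A m (cofm A m y) = y :=
  DirectSum.component.lof_self ℂ (M := fun _ : ℕ => CCol A) m y

lemma ccomp_cofm_ne {m m' : ℕ} (h : m ≠ m') (y : Chains A) : ccomp A m' (cofm A m y) = 0 := by
  have := DirectSum.component.of ℂ (M := fun _ : ℕ => CCol A) m' m y
  rw [dif_neg h] at this
  exact this

lemma ccomp_mem_chainsDeg (𝒜 : ℤ → Submodule ℂ A) (n : ℤ) (m : ℕ) (x : CycChains A)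
    (hx : x ∈ cycDeg A 𝒜 n) : ccomp A m x ∈ chainsDeg A 𝒜 (n + m) := by
  have hle : cycDeg A 𝒜 n ≤ Submodule.comap (ccomp A m) (chainsDeg A 𝒜 (n + m)) := by
    rw [cycDeg, Submodule.span_le]
    rintro _ ⟨m', k, d, a, ha, hsum, rfl⟩
    simp only [SetLike.mem_coe, Submodule.mem_comap]
    by_cases h : m' = m
    · subst h
      rw [ccomp_cofm_same]
      exact Submodule.subset_span ⟨k, d, a, ha, hsum, rfl⟩
    · rw [ccomp_cofm_ne A h]
      exact Submodule.zero_mem _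
  exact hle hx

lemma sum_ccomp (x : CycChains A) :
    ∃ K0 : ℕ, ∀ K, K0 ≤ K → x = ∑ m ∈ Finset.range K, cofm A m (ccomp A m x) := by
  classical
  induction x using DirectSum.induction_on with
  | zero => exact ⟨0, fun K _ => by simp⟩
  | of j b =>
    refine ⟨j + 1, fun K hK => ?_⟩
    rw [Finset.sum_eq_single j]
    · have : ccomp A j (cofm A j b) = b := ccomp_cofm_same A j b
      rw [show (DirectSum.of (fun _ : ℕ => CCol A) j b) = cofm A j b from rfl, this]
    · intro m _ hm
      rw [show (DirectSum.of (fun _ : ℕ => CCol A) j b) = cofm A j b from rfl,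
        (ccomp_cofm_ne A (Ne.symm hm) b : ccomp A m (cofm A j b) = 0), map_zero]
    · intro h; exact absurd (Finset.mem_range.2 (lt_of_lt_of_le (Nat.lt_succ_self j) hK)) h
  | add y z hy hz =>
    obtain ⟨K1, h1⟩ := hy
    obtain ⟨K2, h2⟩ := hz
    refine ⟨max K1 K2, fun K hK => ?_⟩
    have e1 := h1 K (le_trans (le_max_left _ _) hK)
    have e2 := h2 K (le_trans (le_max_right _ _) hK)
    calc y + z = (∑ m ∈ Finset.range K, cofm A m (ccomp A m y))
        + ∑ m ∈ Finset.range K, cofm A m (ccomp A m z) := by rw [← e1, ← e2]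
      _ = ∑ m ∈ Finset.range K, cofm A m (ccomp A m (y + z)) := by
          rw [← Finset.sum_add_distrib]
          exact Finset.sum_congr rfl fun m _ => by rw [map_add, map_add]

lemma Smap_cofm (m : ℕ) (y : Chains A) :
    Smap A (cofm A m y) = if 2 ≤ m then cofm A (m - 2) y else 0 := by
  have : Smap A (cofm A m y) = (if 2 ≤ m then cofm A (m - 2) else 0) y :=
    DirectSum.toModule_lof (R := ℂ) (ι := ℕ)
      (φ := fun m => if 2 ≤ m then cofm A (m - 2) else 0) m y
  rw [this]
  by_cases h : 2 ≤ m
  · rw [if_pos h, if_pos h]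
  · rw [if_neg h, if_neg h]; rfl

theorem partA
    (M : Type) [AddCommGroup M] [Module ℂ M] [FiniteDimensional ℂ M] [Nontrivial M]
    (𝒱 : ℤ → Submodule ℂ M) [DirectSum.Decomposition 𝒱]
    (DH Db T N : Chains (Module.End ℂ M) →ₗ[ℂ] Chains (Module.End ℂ M)) :
    (∀ (i : ℕ)
      (e2 : HC (Module.End ℂ M) (endGrade M 𝒱) (cyclicDifferential (Module.End ℂ M) DH Db T N)
          (-(2 * ((i + 1 : ℕ) : ℤ))) ≃ₗ[ℂ] ℂ),
      IsTrIso M 𝒱 (cyclicDifferential (Module.End ℂ M) DH Db T N) (i + 1) e2 →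
      ∀ (e1 : HC (Module.End ℂ M) (endGrade M 𝒱) (cyclicDifferential (Module.End ℂ M) DH Db T N)
          (-(2 * (i : ℤ))) ≃ₗ[ℂ] ℂ),
      IsTrIso M 𝒱 (cyclicDifferential (Module.End ℂ M) DH Db T N) i e1 →
      ∀ (x : CycChains (Module.End ℂ M))
        (hx : x ∈ cycCocycles (Module.End ℂ M) (endGrade M 𝒱)
          (cyclicDifferential (Module.End ℂ M) DH Db T N) (-(2 * ((i + 1 : ℕ) : ℤ))))
        (hSx : Smap (Module.End ℂ M) x ∈ cycCocycles (Module.End ℂ M) (endGrade M 𝒱)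
          (cyclicDifferential (Module.End ℂ M) DH Db T N) (-(2 * (i : ℤ)))),
        e1 (hcClass (Module.End ℂ M) (endGrade M 𝒱) (cyclicDifferential (Module.End ℂ M) DH Db T N)
              (-(2 * (i : ℤ))) _ hSx) =
          e2 (hcClass (Module.End ℂ M) (endGrade M 𝒱) (cyclicDifferential (Module.End ℂ M) DH Db T N)
              (-(2 * ((i + 1 : ℕ) : ℤ))) _ hx)) := by
  intro i e2 h2 e1 h1 x hx hSx
  set A := Module.End ℂ M
  set 𝒜 := endGrade M 𝒱
  set Dc := cyclicDifferential A DH Db T N with hDc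
  obtain ⟨K0, hK⟩ := sum_ccomp A x
  set j := K0 + 1 with hj
  set c : ℕ → Chains A := fun col => ccomp A col x with hcdef
  have hxsum : x = ∑ col ∈ Finset.range (2 * (i + 1) + 2 * j + 1), cofm A col (c col) :=
    hK _ (by omega)
  have hc2 : ∀ col : ℕ, c col ∈ chainsDeg A 𝒜 ((col : ℤ) - 2 * ((i + 1 : ℕ) : ℤ)) := by
    intro col
    have := ccomp_mem_chainsDeg A 𝒜 (-(2 * ((i + 1 : ℕ) : ℤ))) col x hx.2
    have harg : -(2 * ((i + 1 : ℕ) : ℤ)) + (col : ℤ) = (col : ℤ) - 2 * ((i + 1 : ℕ) : ℤ) := by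
      ring
    rwa [harg] at this
  have hx' : (∑ col ∈ Finset.range (2 * (i + 1) + 2 * j + 1), cofm A col (c col)) ∈
      cycCocycles A 𝒜 Dc (-(2 * ((i + 1 : ℕ) : ℤ))) := hxsum ▸ hx
  have he2 := h2 j c hc2 hx'
  have hcls : hcClass A 𝒜 Dc (-(2 * ((i + 1 : ℕ) : ℤ))) x hx
      = hcClass A 𝒜 Dc (-(2 * ((i + 1 : ℕ) : ℤ))) _ hx' :=
    Subtype.ext (by simp only [hcClass]; rw [← hxsum])
  -- Smap x
  have hS : Smap A x = ∑ col ∈ Finset.range (2 * i + 2 * j + 1), cofm A col (c (col + 2)) := by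
    conv_lhs => rw [hxsum]
    rw [map_sum]
    have hrange : (2 * (i + 1) + 2 * j + 1) = (2 * i + 2 * j + 1) + 1 + 1 := by omega
    rw [hrange, Finset.sum_range_succ', Finset.sum_range_succ']
    simp only [Smap_cofm]
    norm_num
    exact Finset.sum_congr rfl fun m _ => rfl
  have hc1 : ∀ col : ℕ, c (col + 2) ∈ chainsDeg A 𝒜 ((col : ℤ) - 2 * (i : ℤ)) := by
    intro col
    have := hc2 (col + 2)
    have harg : ((col + 2 : ℕ) : ℤ) - 2 * ((i + 1 : ℕ) : ℤ) = (col : ℤ) - 2 * (i : ℤ) := by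
      push_cast; ring
    rwa [harg] at this
  have hSx' : (∑ col ∈ Finset.range (2 * i + 2 * j + 1), cofm A col (c (col + 2))) ∈
      cycCocycles A 𝒜 Dc (-(2 * (i : ℤ))) := hS ▸ hSx
  have he1 := h1 j (fun col => c (col + 2)) hc1 hSx'
  have hcls' : hcClass A 𝒜 Dc (-(2 * (i : ℤ))) _ hSx
      = hcClass A 𝒜 Dc (-(2 * (i : ℤ))) _ hSx' :=
    Subtype.ext (by simp only [hcClass]; rw [← hS])
  rw [hcls', he1, hcls, he2]
  have h22 : 2 * (i + 1) = 2 * i + 2 := by ring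
  rw [h22]
end Aux1

section Aux2


lemma eps_add (m n : ℤ) : (-1 : ℂ) ^ (m + n) = (-1 : ℂ) ^ m * (-1 : ℂ) ^ n :=
  zpow_add₀ (by norm_num) m n

lemma eps_even {z : ℤ} (h : Even z) : (-1 : ℂ) ^ z = 1 := h.neg_one_zpow

lemma eps_sq (m : ℤ) : (-1 : ℂ) ^ m * (-1 : ℂ) ^ m = 1 := by
  rw [← eps_add]; exact eps_even ⟨m, rfl⟩

lemma eps_ne_zero (m : ℤ) : (-1 : ℂ) ^ m ≠ 0 := zpow_ne_zero m (by norm_num)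

lemma eps_add_eps {m n : ℤ} (h : Odd (m - n)) : (-1 : ℂ) ^ m + (-1 : ℂ) ^ n = 0 := by
  have : (-1 : ℂ) ^ m = (-1 : ℂ) ^ (m - n) * (-1 : ℂ) ^ n := by rw [← eps_add]; ring_nf
  rw [this, h.neg_one_zpow]
  ring

variable (M : Type) [AddCommGroup M] [Module ℂ M] [FiniteDimensional ℂ M]
  (𝒱 : ℤ → Submodule ℂ M) [DirectSum.Decomposition 𝒱]

lemma gproj_apply (i : ℤ) (v : M) :
    gprojection M 𝒱 i v = ((DirectSum.decompose 𝒱 v) i : M) := rfl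

lemma gproj_mem (i : ℤ) (v : M) : gprojection M 𝒱 i v ∈ 𝒱 i := by
  rw [gproj_apply]; exact Submodule.coe_mem _

lemma gproj_of_mem_same {i : ℤ} {v : M} (h : v ∈ 𝒱 i) : gprojection M 𝒱 i v = v := by
  rw [gproj_apply, DirectSum.decompose_of_mem_same 𝒱 h]

lemma gproj_of_mem_ne {i j : ℤ} {v : M} (hne : j ≠ i) (h : v ∈ 𝒱 j) :
    gprojection M 𝒱 i v = 0 := by
  rw [gproj_apply, DirectSum.decompose_of_mem_ne 𝒱 h hne]

lemma grades_finite : {i : ℤ | 𝒱 i ≠ ⊥}.Finite :=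
  Submodule.finite_ne_bot_of_iSupIndep
    (DirectSum.Decomposition.isInternal 𝒱).submodule_iSupIndep

lemma str_term_support (f : Module.End ℂ M) :
    (Function.support fun i : ℤ =>
      (-1 : ℂ) ^ i *
        LinearMap.trace ℂ M (gprojection M 𝒱 i ∘ₗ f ∘ₗ gprojection M 𝒱 i)).Finite := by
  apply Set.Finite.subset (grades_finite M 𝒱)
  intro i hi
  simp only [Function.mem_support] at hi
  by_contra h
  simp only [Set.mem_setOf_eq, not_not] at h
  apply hi
  have hP : gprojection M 𝒱 i = 0 := by
    ext v
    have := gproj_mem M 𝒱 i v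
    rw [h] at this
    simpa using this
  rw [hP]
  simp

lemma str_add (f g : Module.End ℂ M) : str M 𝒱 (f + g) = str M 𝒱 f + str M 𝒱 g := by
  rw [str, str, str, ← finsum_add_distrib (str_term_support M 𝒱 f) (str_term_support M 𝒱 g)]
  congr 1
  funext i
  rw [← mul_add]
  congr 1
  rw [← map_add]
  congr 1
  ext v
  simp

lemma str_smul (c : ℂ) (f : Module.End ℂ M) : str M 𝒱 (c • f) = c * str M 𝒱 f := by
  rw [str, str]
  have h1 : ∀ i : ℤ, (-1 : ℂ) ^ i *
      LinearMap.trace ℂ M (gprojection M 𝒱 i ∘ₗ (c • f) ∘ₗ gprojection M 𝒱 i)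
      = c * ((-1 : ℂ) ^ i *
        LinearMap.trace ℂ M (gprojection M 𝒱 i ∘ₗ f ∘ₗ gprojection M 𝒱 i)) := by
    intro i
    have : gprojection M 𝒱 i ∘ₗ (c • f) ∘ₗ gprojection M 𝒱 i
        = c • (gprojection M 𝒱 i ∘ₗ f ∘ₗ gprojection M 𝒱 i) := by
      ext v; simp
    rw [this, map_smul]
    simp only [smul_eq_mul]
    ring
  simp only [h1]
  rw [mul_finsum _ _]


lemma comp_gproj (d : ℤ) {f : Module.End ℂ M} (hf : f ∈ endGrade M 𝒱 d) (i : ℤ) :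
    gprojection M 𝒱 (i + d) ∘ₗ (f ∘ₗ gprojection M 𝒱 i) = f ∘ₗ gprojection M 𝒱 i := by
  ext v
  exact gproj_of_mem_same M 𝒱 (hf i (gprojection M 𝒱 i v) (gproj_mem M 𝒱 i v))

lemma gproj_idem (i : ℤ) :
    gprojection M 𝒱 i ∘ₗ gprojection M 𝒱 i = gprojection M 𝒱 i := by
  ext v
  exact gproj_of_mem_same M 𝒱 (gproj_mem M 𝒱 i v)

/-- graded cyclicity of the supertrace -/
lemma str_mul_comm {d0 d1 : ℤ} {a b : Module.End ℂ M}
    (ha : a ∈ endGrade M 𝒱 d0) (hb : b ∈ endGrade M 𝒱 d1) (hd : d0 + d1 = 0) :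
    str M 𝒱 (b * a) = (-1 : ℂ) ^ d1 * str M 𝒱 (a * b) := by
  set P := gprojection M 𝒱 with hP
  have hid1 : ∀ i : ℤ, b ∘ₗ P i = P (i + d1) ∘ₗ (b ∘ₗ P i) :=
    fun i => (comp_gproj M 𝒱 d1 hb i).symm
  have hid0 : ∀ i : ℤ, a ∘ₗ P (i + d1) = P i ∘ₗ (a ∘ₗ P (i + d1)) := by
    intro i
    have := (comp_gproj M 𝒱 d0 ha (i + d1)).symm
    rwa [show i + d1 + d0 = i by omega] at this
  have key : ∀ i : ℤ,
      LinearMap.trace ℂ M (P i ∘ₗ (a * b) ∘ₗ P i)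
        = LinearMap.trace ℂ M (P (i + d1) ∘ₗ (b * a) ∘ₗ P (i + d1)) := by
    intro i
    have key1 : P i ∘ₗ (a * b) ∘ₗ P i
        = (a ∘ₗ P (i + d1)) * (b ∘ₗ P i) := by
      show P i ∘ₗ (a ∘ₗ b) ∘ₗ P i = (a ∘ₗ P (i + d1)) ∘ₗ (b ∘ₗ P i)
      conv_lhs => rw [LinearMap.comp_assoc, hid1 i]
      conv_rhs => rw [hid0 i]
      simp only [LinearMap.comp_assoc]
    have key2 : P (i + d1) ∘ₗ (b * a) ∘ₗ P (i + d1)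
        = (b ∘ₗ P i) * (a ∘ₗ P (i + d1)) := by
      show P (i + d1) ∘ₗ (b ∘ₗ a) ∘ₗ P (i + d1) = (b ∘ₗ P i) ∘ₗ (a ∘ₗ P (i + d1))
      conv_lhs => rw [LinearMap.comp_assoc, hid0 i]
      conv_rhs => rw [hid1 i]
      simp only [LinearMap.comp_assoc]
    rw [key1, key2, LinearMap.trace_mul_comm]
  set g : ℤ → ℂ := fun j => (-1 : ℂ) ^ j * LinearMap.trace ℂ M (P j ∘ₗ (b * a) ∘ₗ P j)
    with hg
  have hgfin : (Function.support g).Finite := str_term_support M 𝒱 (b * a)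
  have step1 : str M 𝒱 (a * b) = ∑ᶠ i : ℤ, (-1 : ℂ) ^ (-d1) * g (i + d1) := by
    rw [str]
    congr 1
    funext i
    rw [key i, hg]
    simp only
    rw [← mul_assoc, ← eps_add]
    congr 2
    ring
  have hcompfin : (Function.support fun i : ℤ => g (i + d1)).Finite := by
    have : (Function.support fun i : ℤ => g (i + d1))
        = (fun i : ℤ => i + d1) ⁻¹' (Function.support g) := rfl
    rw [this]
    exact Set.Finite.preimage (Set.injOn_of_injective (add_left_injective d1)) hgfin
  have step2 : str M 𝒱 (a * b) = (-1 : ℂ) ^ (-d1) * str M 𝒱 (b * a) := by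
    rw [step1, ← mul_finsum _ _]
    congr 1
    have := finsum_comp_equiv (Equiv.addRight d1) (f := g)
    rw [str]
    exact this
  have : (-1 : ℂ) ^ d1 * str M 𝒱 (a * b)
      = ((-1 : ℂ) ^ d1 * (-1 : ℂ) ^ (-d1)) * str M 𝒱 (b * a) := by
    rw [step2]; ring
  rw [this, ← eps_add]
  norm_num


lemma str_zero : str M 𝒱 (0 : Module.End ℂ M) = 0 := by
  rw [str]
  have : ∀ i : ℤ, (-1 : ℂ) ^ i *
      LinearMap.trace ℂ M (gprojection M 𝒱 i ∘ₗ (0 : Module.End ℂ M) ∘ₗ gprojection M 𝒱 i)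
      = 0 := by
    intro i
    simp
  simp only [this]
  exact finsum_zero

lemma strChain_inc_one (f : Module.End ℂ M) :
    strChain M 𝒱 (inc (Module.End ℂ M) 1 (tprod ℂ (fun _ : Fin 1 => f))) = str M 𝒱 f := by
  rw [strChain]
  congr 1
  have h1 : (DirectSum.component ℂ ℕ (fun k => TPow (Module.End ℂ M) k) 1)
      (inc (Module.End ℂ M) 1 (tprod ℂ (fun _ : Fin 1 => f)))
      = tprod ℂ (fun _ : Fin 1 => f) :=
    DirectSum.component.lof_self (R := ℂ) (M := fun k => TPow (Module.End ℂ M) k) 1 _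
  rw [h1, PiTensorProduct.subsingletonEquiv_apply_tprod]

lemma strChain_inc_ne {k : ℕ} (hk : k ≠ 1) (t : TPow (Module.End ℂ M) k) :
    strChain M 𝒱 (inc (Module.End ℂ M) k t) = 0 := by
  rw [strChain]
  have h1 : (DirectSum.component ℂ ℕ (fun k => TPow (Module.End ℂ M) k) 1)
      (inc (Module.End ℂ M) k t) = 0 := by
    have := DirectSum.component.of (R := ℂ) (M := fun k => TPow (Module.End ℂ M) k) 1 k t
    rw [dif_neg hk] at this
    exact this
  rw [h1, map_zero]
  exact str_zero M 𝒱

/-- the supertrace of the grade projection onto a nonzero piece is nonzero -/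
lemma str_gproj_ne_zero {i0 : ℤ} (h : 𝒱 i0 ≠ ⊥) :
    str M 𝒱 (gprojection M 𝒱 i0) ≠ 0 := by
  set P := gprojection M 𝒱
  have hterm : ∀ i : ℤ, i ≠ i0 → (-1 : ℂ) ^ i *
      LinearMap.trace ℂ M (P i ∘ₗ P i0 ∘ₗ P i) = 0 := by
    intro i hi
    have h0 : P i0 ∘ₗ P i = 0 := by
      ext v
      exact gproj_of_mem_ne M 𝒱 hi (gproj_mem M 𝒱 i v)
    have h2 : P i ∘ₗ P i0 ∘ₗ P i = 0 := by
      rw [h0, LinearMap.comp_zero]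
    rw [h2, map_zero, mul_zero]
  have hsum : str M 𝒱 (P i0) = (-1 : ℂ) ^ i0 *
      LinearMap.trace ℂ M (P i0 ∘ₗ P i0 ∘ₗ P i0) := by
    rw [str]
    exact finsum_eq_single _ i0 hterm
  have hPP : P i0 ∘ₗ P i0 ∘ₗ P i0 = P i0 := by
    rw [gproj_idem, gproj_idem]
  have hproj : LinearMap.IsProj (𝒱 i0) (P i0) :=
    ⟨fun v => gproj_mem M 𝒱 i0 v, fun v hv => gproj_of_mem_same M 𝒱 hv⟩
  have htr : LinearMap.trace ℂ M (P i0) = (Module.finrank ℂ (𝒱 i0) : ℂ) :=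
    hproj.trace
  have hrk : Module.finrank ℂ (𝒱 i0) ≠ 0 := by
    have : Nontrivial (𝒱 i0) := Submodule.nontrivial_iff_ne_bot.mpr h
    exact Module.finrank_pos.ne'
  rw [hsum, hPP, htr]
  exact mul_ne_zero (eps_ne_zero i0) (Nat.cast_ne_zero.mpr hrk)


def strL : Chains (Module.End ℂ M) →ₗ[ℂ] ℂ where
  toFun := strChain M 𝒱
  map_add' x y := by
    unfold strChain
    rw [map_add, map_add, str_add]
  map_smul' c x := by
    show strChain M 𝒱 (c • x) = c • strChain M 𝒱 x
    unfold strChain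
    rw [map_smul, map_smul, str_smul]
    rfl

lemma strL_apply (x : Chains (Module.End ℂ M)) : strL M 𝒱 x = strChain M 𝒱 x := rfl

lemma gproj_endGrade_zero (i0 : ℤ) : gprojection M 𝒱 i0 ∈ endGrade M 𝒱 0 := by
  intro j v hv
  rw [add_zero]
  by_cases h : j = i0
  · subst h
    rw [gproj_of_mem_same M 𝒱 hv]
    exact hv
  · rw [gproj_of_mem_ne M 𝒱 h hv]
    exact Submodule.zero_mem _

lemma exists_grade_ne_bot [Nontrivial M] : ∃ i : ℤ, 𝒱 i ≠ ⊥ := by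
  by_contra h
  push_neg at h
  have htop := (DirectSum.Decomposition.isInternal 𝒱).submodule_iSup_eq_top
  have : (⊤ : Submodule ℂ M) = ⊥ := by
    rw [← htop, iSup_eq_bot]
    exact fun i => h i
  exact absurd this top_ne_bot

lemma strL_vanish_boundary (DH : Chains (Module.End ℂ M) →ₗ[ℂ] Chains (Module.End ℂ M))
    (hDH : IsHochschildDifferential (Module.End ℂ M) (endGrade M 𝒱) 0 DH) :
    cobound (Module.End ℂ M) (endGrade M 𝒱) DH 0 ≤ LinearMap.ker (strL M 𝒱) := by
  set A := Module.End ℂ M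
  rw [cobound, Submodule.map_le_iff_le_comap, chainsDeg, Submodule.span_le]
  rintro _ ⟨k, d, a, ha, hsum, rfl⟩
  simp only [SetLike.mem_coe, Submodule.mem_comap, LinearMap.mem_ker]
  match k with
  | 0 =>
    have hae : a = fun _ : Fin 1 => a 0 :=
      funext fun i => congrArg a (Fin.ext (by omega))
    rw [hae, hDH.1 (a 0)]
    have : ((0 : A →ₗ[ℂ] A) (a 0)) = (0 : A) := rfl
    rw [this]
    have hz : (tprod ℂ (fun _ : Fin 1 => (0 : A))) = 0 :=
      MultilinearMap.map_coord_zero _ (0 : Fin 1) rfl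
    rw [hz, map_zero, map_zero]
  | 1 =>
    rw [hDH.2 0 d a ha, map_add, map_add, map_sum, map_sum]
    have hdsum : d 0 + d 1 = 0 := by
      have := hsum
      rw [Fin.sum_univ_two] at this
      omega
    -- delta terms vanish
    have hdelta : ∀ j : Fin 2,
        strL M 𝒱 (((-1 : ℂ) ^ (psum d (j : ℕ) + ((j : ℕ) : ℤ))) •
          inc A 2 (tprod ℂ (Function.update a j ((0 : A →ₗ[ℂ] A) (a j))))) = 0 := by
      intro j
      have h0 : ((0 : A →ₗ[ℂ] A) (a j)) = (0 : A) := rfl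
      rw [h0]
      have hz : (tprod ℂ (Function.update a j (0 : A))) = 0 :=
        MultilinearMap.map_coord_zero _ j (Function.update_self j 0 a)
      rw [hz, map_zero, smul_zero, map_zero]
    rw [Finset.sum_congr rfl (fun j _ => hdelta j), Finset.sum_const_zero, add_zero]
    rw [Fin.sum_univ_one]
    rw [map_smul, map_smul, strL_apply, strL_apply]
    have hmul : (tprod ℂ (mulAt a 0) : TPow A (0 + 1)) = tprod ℂ (fun _ : Fin 1 => a 0 * a 1) := by
      congr 1
      funext i
      rw [show i = (0 : Fin (0 + 1)) from Fin.ext (by omega)]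
      rfl
    have hcyc : (tprod ℂ (cycMul a) : TPow A (0 + 1)) = tprod ℂ (fun _ : Fin 1 => a 1 * a 0) := by
      congr 1
      funext i
      rw [show i = (0 : Fin (0 + 1)) from Fin.ext (by omega)]
      rfl
    rw [hmul, hcyc]
    rw [show (inc A (0 + 1)) = inc A 1 from rfl]
    rw [strChain_inc_one, strChain_inc_one]
    have hcomm : str M 𝒱 (a 1 * a 0) = (-1 : ℂ) ^ (d 1) * str M 𝒱 (a 0 * a 1) :=
      str_mul_comm M 𝒱 (ha 0) (ha 1) hdsum
    rw [hcomm]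
    have hpsum : psum d ((((0 : Fin 1) : ℕ)) + 1) = d 0 := by
      rw [show (((0 : Fin 1) : ℕ)) + 1 = 1 from rfl, psum, Fin.sum_univ_two]
      norm_num
    have hpsum' : psum d (0 + 1) = d 0 := hpsum
    rw [hpsum, hpsum']
    have hlast : d (Fin.last (0 + 1)) = d 1 := rfl
    rw [hlast]
    set X := str M 𝒱 (a 0 * a 1)
    have hc1 : (((0 : Fin 1) : ℕ) : ℤ) = 0 := rfl
    have hc2 : (((0 : ℕ)) : ℤ) = 0 := rfl
    simp only [hc1, hc2, add_zero]
    have hexp : (-1 : ℂ) ^ ((d 1 + 1) * d 0) * ((-1 : ℂ) ^ (d 1) * X)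
        = (-1 : ℂ) ^ ((d 1 + 1) * d 0 + d 1) * X := by
      rw [eps_add]
      ring
    have hodd : Odd ((d 0 + 1) - ((d 1 + 1) * d 0 + d 1)) := by
      have hd1 : d 1 = -(d 0) := by omega
      obtain ⟨t, ht⟩ := Int.even_mul_succ_self (d 0)
      refine ⟨t, ?_⟩
      rw [hd1]
      ring_nf
      ring_nf at ht
      omega
    calc (-1 : ℂ) ^ (d 0 + 1) • X + (-1 : ℂ) ^ ((d 1 + 1) * d 0) • ((-1 : ℂ) ^ (d 1) * X)
        = ((-1 : ℂ) ^ (d 0 + 1) + (-1 : ℂ) ^ ((d 1 + 1) * d 0 + d 1)) * X := by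
          rw [smul_eq_mul, smul_eq_mul, hexp]
          ring
      _ = 0 := by rw [eps_add_eps hodd, zero_mul]
  | (Nat.succ (Nat.succ k')) =>
    rw [hDH.2 (k' + 1) d a ha, map_add, map_add, map_sum, map_sum]
    have t1 : ∀ i : Fin (k' + 2), strL M 𝒱
        (((-1 : ℂ) ^ (psum d ((i : ℕ) + 1) + ((i : ℕ) : ℤ) + 1)) •
          inc A (k' + 2) (tprod ℂ (mulAt a i))) = 0 := by
      intro i
      rw [map_smul, strL_apply, strChain_inc_ne M 𝒱 (by omega), smul_zero]
    have t2 : strL M 𝒱 (((-1 : ℂ) ^ ((d (Fin.last (k' + 2)) + 1) *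
        (psum d (k' + 2) + ((k' + 1 : ℕ) : ℤ)))) • inc A (k' + 2) (tprod ℂ (cycMul a))) = 0 := by
      rw [map_smul, strL_apply, strChain_inc_ne M 𝒱 (by omega), smul_zero]
    have t3 : ∀ j : Fin (k' + 3), strL M 𝒱
        (((-1 : ℂ) ^ (psum d (j : ℕ) + ((j : ℕ) : ℤ))) •
          inc A (k' + 3) (tprod ℂ (Function.update a j ((0 : A →ₗ[ℂ] A) (a j))))) = 0 := by
      intro j
      rw [map_smul, strL_apply, strChain_inc_ne M 𝒱 (by omega), smul_zero]
    rw [Finset.sum_congr rfl (fun i _ => t1 i), Finset.sum_congr rfl (fun j _ => t3 j), t2]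
    simp


end Aux2

section Aux3


theorem partB
    (M : Type) [AddCommGroup M] [Module ℂ M] [FiniteDimensional ℂ M] [Nontrivial M]
    (𝒱 : ℤ → Submodule ℂ M) [DirectSum.Decomposition 𝒱]
    (DH Db T N : Chains (Module.End ℂ M) →ₗ[ℂ] Chains (Module.End ℂ M))
    (hDH : IsHochschildDifferential (Module.End ℂ M) (endGrade M 𝒱) 0 DH) :
    (∀ (e0 : HC (Module.End ℂ M) (endGrade M 𝒱) (cyclicDifferential (Module.End ℂ M) DH Db T N)
          (-(2 * ((0 : ℕ) : ℤ))) ≃ₗ[ℂ] ℂ),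
      IsTrIso M 𝒱 (cyclicDifferential (Module.End ℂ M) DH Db T N) 0 e0 →
      ∀ (eH : HH (Module.End ℂ M) (endGrade M 𝒱) DH 0 ≃ₗ[ℂ] ℂ),
      IsStrIso M 𝒱 DH eH →
      ∀ (x : Chains (Module.End ℂ M))
        (hx : x ∈ cocycles (Module.End ℂ M) (endGrade M 𝒱) DH 0)
        (hIx : Imap (Module.End ℂ M) x ∈ cycCocycles (Module.End ℂ M) (endGrade M 𝒱)
          (cyclicDifferential (Module.End ℂ M) DH Db T N) (-(2 * ((0 : ℕ) : ℤ)))),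
        e0 (hcClass (Module.End ℂ M) (endGrade M 𝒱) (cyclicDifferential (Module.End ℂ M) DH Db T N)
              (-(2 * ((0 : ℕ) : ℤ))) _ hIx) =
          eH (hhClass (Module.End ℂ M) (endGrade M 𝒱) DH 0 x hx)) := by
  intro e0 h0 eH hstr x hx hIx
  letI A := Module.End ℂ M
  letI 𝒜 := endGrade M 𝒱
  letI Dc := cyclicDifferential A DH Db T N
  -- the e0 side
  set c : ℕ → Chains A := fun col => if col = 0 then x else 0 with hcdef
  have hc : ∀ col : ℕ, c col ∈ chainsDeg A 𝒜 ((col : ℤ) - 2 * ((0 : ℕ) : ℤ)) := by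
    intro col
    by_cases h : col = 0
    · subst h
      have : ((0 : ℕ) : ℤ) - 2 * ((0 : ℕ) : ℤ) = 0 := by norm_num
      rw [hcdef]
      simp only [if_pos rfl]
      rw [this]
      exact hx.2
    · rw [hcdef]
      simp only [if_neg h]
      exact Submodule.zero_mem _
  have hsum0 : (∑ col ∈ Finset.range (2 * 0 + 2 * 0 + 1), cofm A col (c col)) = Imap A x := by
    rw [show 2 * 0 + 2 * 0 + 1 = 1 from rfl, Finset.sum_range_one]
    rw [hcdef]
    simp only [if_pos rfl]
    rfl
  have hIx' : (∑ col ∈ Finset.range (2 * 0 + 2 * 0 + 1), cofm A col (c col)) ∈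
      cycCocycles A 𝒜 Dc (-(2 * ((0 : ℕ) : ℤ))) := hsum0.symm ▸ hIx
  have he0 := h0 0 c hc hIx'
  have hcls0 : hcClass A 𝒜 Dc (-(2 * ((0 : ℕ) : ℤ))) _ hIx
      = hcClass A 𝒜 Dc (-(2 * ((0 : ℕ) : ℤ))) _ hIx' :=
    Subtype.ext (by simp only [hcClass]; rw [hsum0])
  -- the eH side
  set strQ := Submodule.liftQ (cobound A 𝒜 DH 0) (strL M 𝒱)
    (strL_vanish_boundary M 𝒱 DH hDH) with hstrQ
  set ψ := strQ ∘ₗ (HHsub A 𝒜 DH 0).subtype with hψdef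
  have hψ : ∀ (z : Chains A) (hz : z ∈ cocycles A 𝒜 DH 0),
      ψ (hhClass A 𝒜 DH 0 z hz) = strChain M 𝒱 z := by
    intro z hz
    show strQ ((cobound A 𝒜 DH 0).mkQ z) = strChain M 𝒱 z
    rw [hstrQ]
    rw [Submodule.mkQ_apply, Submodule.liftQ_apply]
    rfl
  obtain ⟨i0, hi0⟩ := exists_grade_ne_bot M 𝒱
  set f := gprojection M 𝒱 i0 with hfdef
  have hf0 : f ∈ endGrade M 𝒱 0 := gproj_endGrade_zero M 𝒱 i0
  have hzf : inc A 1 (tprod ℂ (fun _ : Fin 1 => f)) ∈ cocycles A 𝒜 DH 0 := by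
    constructor
    · show DH (inc A 1 (tprod ℂ (fun _ : Fin 1 => f))) = 0
      rw [hDH.1 f]
      have h0' : ((0 : A →ₗ[ℂ] A) f) = (0 : A) := rfl
      rw [h0']
      rw [MultilinearMap.map_coord_zero _ (0 : Fin 1) rfl, map_zero]
    · exact Submodule.subset_span
        ⟨0, fun _ => 0, fun _ => f, fun i => hf0, by simp, rfl⟩
  have heHf := hstr f hf0 hzf
  have hψf : ψ (hhClass A 𝒜 DH 0 _ hzf) = str M 𝒱 f := by
    rw [hψ _ hzf]
    exact strChain_inc_one M 𝒱 f
  have hstrf : str M 𝒱 f ≠ 0 := str_gproj_ne_zero M 𝒱 hi0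
  set μ := ψ (eH.symm 1) with hμdef
  have hμall : ∀ y : HH A 𝒜 DH 0, ψ y = eH y * μ := by
    intro y
    have h1 : y = eH.symm (eH y) := (eH.symm_apply_apply y).symm
    calc ψ y = ψ (eH.symm (eH y)) := by rw [← h1]
      _ = ψ (eH.symm ((eH y) • (1 : ℂ))) := by rw [smul_eq_mul, mul_one]
      _ = ψ ((eH y) • eH.symm 1) := by rw [LinearEquiv.map_smul]
      _ = (eH y) • ψ (eH.symm 1) := by rw [LinearMap.map_smul]
      _ = eH y * μ := by rw [hμdef, smul_eq_mul]
  have hμ1 : μ = 1 := by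
    have h1 := hμall (hhClass A 𝒜 DH 0 _ hzf)
    rw [hψf, heHf] at h1
    have := mul_left_cancel₀ hstrf (by rw [← h1, mul_one] : str M 𝒱 f * 1 = str M 𝒱 f * μ)
    exact this.symm
  have hfinal : strChain M 𝒱 x = eH (hhClass A 𝒜 DH 0 x hx) := by
    rw [← hψ x hx, hμall, hμ1, mul_one]
  rw [hcls0, he0]
  have : c (2 * 0) = x := by rw [hcdef]; simp
  rw [this, hfinal]


end Aux3

/-- For `B = End(V)`: (a) `tr_{2i-2} ∘ S_* = tr_{2i}` on `HC_{-2i}(B)`,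
where `S_*` is induced by the periodicity map `S`; (b) `tr_0 ∘ 𝓘_* = str` on `HH_0(B)`, where
`𝓘_*` is induced by the inclusion `𝓘` of the Hochschild complex as the `0`-th column of
Tsygan's double complex, and `str : HH_0(B) → ℂ` is the supertrace isomorphism.  (Here the
trace isomorphisms `tr_{2i}` and the supertrace isomorphism are characterized by the
properties `IsTrIso` and `IsStrIso` respectively, and the induced maps on (co)homology are
expressed on classes of cocycles.) -/
theorem periodicity_and_inclusion_compatibilities
    (M : Type) [AddCommGroup M] [Module ℂ M] [FiniteDimensional ℂ M] [Nontrivial M]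
    (𝒱 : ℤ → Submodule ℂ M) [DirectSum.Decomposition 𝒱]
    (DH Db T N : Chains (Module.End ℂ M) →ₗ[ℂ] Chains (Module.End ℂ M))
    (hDH : IsHochschildDifferential (Module.End ℂ M) (endGrade M 𝒱) 0 DH)
    (hDb : IsBarDifferential (Module.End ℂ M) (endGrade M 𝒱) 0 Db)
    (hT : IsCyclicOp (Module.End ℂ M) (endGrade M 𝒱) T)
    (hN : IsNormOp (Module.End ℂ M) (endGrade M 𝒱) N) :
    (∀ (i : ℕ)
      (e2 : HC (Module.End ℂ M) (endGrade M 𝒱) (cyclicDifferential (Module.End ℂ M) DH Db T N)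
          (-(2 * ((i + 1 : ℕ) : ℤ))) ≃ₗ[ℂ] ℂ),
      IsTrIso M 𝒱 (cyclicDifferential (Module.End ℂ M) DH Db T N) (i + 1) e2 →
      ∀ (e1 : HC (Module.End ℂ M) (endGrade M 𝒱) (cyclicDifferential (Module.End ℂ M) DH Db T N)
          (-(2 * (i : ℤ))) ≃ₗ[ℂ] ℂ),
      IsTrIso M 𝒱 (cyclicDifferential (Module.End ℂ M) DH Db T N) i e1 →
      ∀ (x : CycChains (Module.End ℂ M))
        (hx : x ∈ cycCocycles (Module.End ℂ M) (endGrade M 𝒱)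
          (cyclicDifferential (Module.End ℂ M) DH Db T N) (-(2 * ((i + 1 : ℕ) : ℤ))))
        (hSx : Smap (Module.End ℂ M) x ∈ cycCocycles (Module.End ℂ M) (endGrade M 𝒱)
          (cyclicDifferential (Module.End ℂ M) DH Db T N) (-(2 * (i : ℤ)))),
        e1 (hcClass (Module.End ℂ M) (endGrade M 𝒱) (cyclicDifferential (Module.End ℂ M) DH Db T N)
              (-(2 * (i : ℤ))) _ hSx) =
          e2 (hcClass (Module.End ℂ M) (endGrade M 𝒱) (cyclicDifferential (Module.End ℂ M) DH Db T N)
              (-(2 * ((i + 1 : ℕ) : ℤ))) _ hx)) ∧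
    (∀ (e0 : HC (Module.End ℂ M) (endGrade M 𝒱) (cyclicDifferential (Module.End ℂ M) DH Db T N)
          (-(2 * ((0 : ℕ) : ℤ))) ≃ₗ[ℂ] ℂ),
      IsTrIso M 𝒱 (cyclicDifferential (Module.End ℂ M) DH Db T N) 0 e0 →
      ∀ (eH : HH (Module.End ℂ M) (endGrade M 𝒱) DH 0 ≃ₗ[ℂ] ℂ),
      IsStrIso M 𝒱 DH eH →
      ∀ (x : Chains (Module.End ℂ M))
        (hx : x ∈ cocycles (Module.End ℂ M) (endGrade M 𝒱) DH 0)
        (hIx : Imap (Module.End ℂ M) x ∈ cycCocycles (Module.End ℂ M) (endGrade M 𝒱)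
          (cyclicDifferential (Module.End ℂ M) DH Db T N) (-(2 * ((0 : ℕ) : ℤ)))),
        e0 (hcClass (Module.End ℂ M) (endGrade M 𝒱) (cyclicDifferential (Module.End ℂ M) DH Db T N)
              (-(2 * ((0 : ℕ) : ℤ))) _ hIx) =
          eH (hhClass (Module.End ℂ M) (endGrade M 𝒱) DH 0 x hx)) :=
  ⟨partA M 𝒱 DH Db T N, partB M 𝒱 DH Db T N hDH⟩

end FLS
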